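/- For ω > 0 and -2√ω < c ≤ 0 (in fact for all c with c² < 4ω), putting r = √(4ω - c²), the profile ϕ_{ω,c} satisfies the ODE -ϕ'' + (ω - c²/4)ϕ + (c/2)ϕ³ - (3/16)ϕ⁵ = 0, where ϕ(x) = ((√ω/r²)(cosh(rx) - c/(2√ω)))^{-1/2}. -/

import Mathlib

/-- The real soliton profile `ϕ_{ω,c}` of the derivative NLS. -/
noncomputable def varphi (ω c x : ℝ) : ℝ :=
  (Real.sqrt ω / (4 * ω - c ^ 2)
      * (Real.cosh (x * Real.sqrt (4 * ω - c ^ 2)) - c / (2 * Real.sqrt ω)))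
    ^ (-(1 / 2 : ℝ))

/-!
Write `ϕ = g^(-1/2)` with `g = A (cosh (r x) - b)`. Then `ϕ'' = -½ g'' ϕ³ + ¾ g'² ϕ⁵`, and since
`g'' = r² (g + A b)`, `g'² = r² ((g + A b)² - A²)` and `g ϕ² = 1`, this is a polynomial in `ϕ`:
`ϕ'' = (r²/4) ϕ + r² A b ϕ³ + ¾ r² A² (b² - 1) ϕ⁵`. For `A = √ω / r²`, `b = c / (2√ω)` and
`r² = 4ω - c²` the three coefficients are `ω - c²/4`, `c/2` and `-3/16`.
-/

open Real

theorem rpow_neg_half_pow_three {a : ℝ} (ha : 0 < a) :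
    (a ^ (-(1 / 2 : ℝ))) ^ 3 = a ^ (-(1 / 2 : ℝ) - 1) := by
  rw [← rpow_natCast, ← rpow_mul ha.le]
  norm_num

theorem rpow_neg_half_sq_mul_self {a : ℝ} (ha : 0 < a) :
    (a ^ (-(1 / 2 : ℝ))) ^ 2 * a = 1 := by
  rw [← rpow_natCast, ← rpow_mul ha.le, ← rpow_add_one ha.ne']
  norm_num

theorem HasDerivAt.rpow_neg_half {g : ℝ → ℝ} {g' x : ℝ} (hg : HasDerivAt g g' x)
    (hx : 0 < g x) :
    HasDerivAt (fun y => g y ^ (-(1 / 2 : ℝ))) (-(1 / 2) * g' * (g x ^ (-(1 / 2 : ℝ))) ^ 3) x := by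
  convert hg.rpow_const (Or.inl hx.ne') using 1
  rw [rpow_neg_half_pow_three hx]
  ring

theorem deriv_deriv_rpow_neg_half {g g' : ℝ → ℝ} {g'' x : ℝ}
    (hg : ∀ y, HasDerivAt g (g' y) y) (hg' : HasDerivAt g' g'' x) (hpos : ∀ y, 0 < g y) :
    deriv (deriv fun y => g y ^ (-(1 / 2 : ℝ))) x =
      -(1 / 2) * g'' * (g x ^ (-(1 / 2 : ℝ))) ^ 3
        + 3 / 4 * g' x ^ 2 * (g x ^ (-(1 / 2 : ℝ))) ^ 5 := by
  have hderiv : deriv (fun y => g y ^ (-(1 / 2 : ℝ))) =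
      fun y => -(1 / 2) * g' y * (g y ^ (-(1 / 2 : ℝ))) ^ 3 :=
    funext fun y => ((hg y).rpow_neg_half (hpos y)).deriv
  rw [hderiv]
  have h := ((hg'.const_mul (-(1 / 2))).mul
    (((hg x).rpow_neg_half (hpos x)).pow 3))
  refine h.deriv.trans ?_
  simp only [Pi.pow_apply, Nat.cast_ofNat]
  ring

noncomputable def coshProfile (A b r y : ℝ) : ℝ :=
  (A * (cosh (y * r) - b)) ^ (-(1 / 2 : ℝ))

theorem deriv_deriv_coshProfile {A b : ℝ} (r x : ℝ) (hA : 0 < A) (hb : b < 1) :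
    deriv (deriv (coshProfile A b r)) x =
      r ^ 2 / 4 * coshProfile A b r x + r ^ 2 * A * b * coshProfile A b r x ^ 3
        + 3 / 4 * r ^ 2 * A ^ 2 * (b ^ 2 - 1) * coshProfile A b r x ^ 5 := by
  have hpos : ∀ y, 0 < A * (cosh (y * r) - b) := fun y =>
    mul_pos hA (by linarith [one_le_cosh (y * r)])
  have hg : ∀ y, HasDerivAt (fun y => A * (cosh (y * r) - b)) (A * (sinh (y * r) * r)) y := by
    intro y
    simpa using (((hasDerivAt_id y).mul_const r).cosh.sub_const b).const_mul A
  have hg' : HasDerivAt (fun y => A * (sinh (y * r) * r)) (A * (cosh (x * r) * r * r)) x := by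
    simpa using (((hasDerivAt_id x).mul_const r).sinh.mul_const r).const_mul A
  have hf : coshProfile A b r = fun y => (A * (cosh (y * r) - b)) ^ (-(1 / 2 : ℝ)) := rfl
  rw [hf, deriv_deriv_rpow_neg_half hg hg' hpos]
  beta_reduce
  set p := (A * (cosh (x * r) - b)) ^ (-(1 / 2 : ℝ))
  have hp : p ^ 2 * (A * (cosh (x * r) - b)) = 1 := rpow_neg_half_sq_mul_self (hpos x)
  linear_combination (-3 / 4 * r ^ 2 * A ^ 2 * p ^ 5) * cosh_sq_sub_sinh_sq (x * r)
    + r ^ 2 * (p * (3 * p ^ 2 * (A * (cosh (x * r) - b)) + 1) / 4 + 3 / 2 * A * b * p ^ 3) * hp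

/-- the explicit profile `ϕ_{ω,c}` solves
`-ϕ'' + (ω - c²/4)ϕ + (c/2)ϕ³ - (3/16)ϕ⁵ = 0`. -/
theorem stmt15 (ω c : ℝ) (hω : 0 < ω)
    (hc1 : -2 * Real.sqrt ω < c) (hc2 : c < 2 * Real.sqrt ω) :
    ∀ x : ℝ,
      -(deriv (deriv (varphi ω c)) x) + (ω - c ^ 2 / 4) * varphi ω c x
        + (c / 2) * (varphi ω c x) ^ 3 - (3 / 16) * (varphi ω c x) ^ 5 = 0 := by
  intro x
  have hs : 0 < √ω := sqrt_pos.2 hω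
  have hs2 : √ω ^ 2 = ω := sq_sqrt hω.le
  have hD : 0 < 4 * ω - c ^ 2 := by nlinarith
  have hb : c / (2 * √ω) < 1 := (div_lt_one (by positivity)).2 hc2
  have hprofile : varphi ω c = coshProfile (√ω / (4 * ω - c ^ 2)) (c / (2 * √ω)) √(4 * ω - c ^ 2) :=
    rfl
  rw [hprofile, deriv_deriv_coshProfile _ x (div_pos hs hD) hb, sq_sqrt hD.le]
  generalize coshProfile _ _ _ x = p
  field_simp
  linear_combination 192 * p ^ 5 * hs2
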